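/- For n, m ≥ 3 with n > m−2, there is a red/blue coloring of K_{2n} ⊔ K_{1,n} with no red K_{1,n} and no blue K_{1,m}+e: take red graph 2K_n, blue graph K_{n,n}, and join the extra vertex in blue to all n vertices of one part. -/

import Mathlib

/-
Each vertex of the red graph `2K_n` has degree at most `n - 1`, so there is no red `K_{1,n}`.
Every blue edge joins a vertex `< n` to a vertex `≥ n`, so the blue graph is bipartite, hence
triangle-free, while `K_{1,m}+e` contains the triangle on its vertices `0, 1, 2`.
-/

open SimpleGraph

/-- `Contains G H` : the graph `G` contains a copy of `H`. -/
def Contains {V W : Type*} (G : SimpleGraph V) (H : SimpleGraph W) : Prop :=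
  ∃ f : W → V, Function.Injective f ∧ ∀ a b, H.Adj a b → G.Adj (f a) (f b)

/-- The star `K_{1,n}` on `n+1` vertices: vertex `0` is joined to all others. -/
def starG (n : ℕ) : SimpleGraph (Fin (n + 1)) :=
  SimpleGraph.fromRel (fun a _ => a = 0)

/-- `K_{1,m}+e` on `m+1` vertices: vertex `0` joined to all others, plus the edge `{1,2}`. -/
def starPlusE (m : ℕ) : SimpleGraph (Fin (m + 1)) :=
  SimpleGraph.fromRel (fun a b => a = 0 ∨ (a = 1 ∧ b = 2))

/-- `K_N ⊔ K_{1,k}` : complete graph on the first `N` vertices of `Fin (N+1)`,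
with the last vertex joined to exactly the `k` vertices of value `< k`. -/
def KstarK1 (N k : ℕ) : SimpleGraph (Fin (N + 1)) :=
  SimpleGraph.fromRel (fun a b => (a.val < N ∧ b.val < N) ∨ (a.val = N ∧ b.val < k))

/-- `ArrowsHost Host G H` : every red/blue coloring of the edges of `Host`
contains a red copy of `G` or a blue copy of `H`. -/
def ArrowsHost {V W₁ W₂ : Type*} (Host : SimpleGraph V)
    (G : SimpleGraph W₁) (H : SimpleGraph W₂) : Prop :=
  ∀ R : SimpleGraph V, R ≤ Host → Contains R G ∨ Contains (Host \ R) H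

/-- The red graph `2K_n` on the first `2n` vertices; the extra vertex `2n` is isolated. -/
def twoCliques (n : ℕ) : SimpleGraph (Fin (2 * n + 1)) :=
  SimpleGraph.fromRel (fun a b : Fin (2 * n + 1) =>
    (a.val < n ∧ b.val < n) ∨ (n ≤ a.val ∧ a.val < 2 * n ∧ n ≤ b.val ∧ b.val < 2 * n))

instance (n : ℕ) : DecidableRel (twoCliques n).Adj := fun a b =>
  inferInstanceAs (Decidable (a ≠ b ∧ (_ ∨ _)))

theorem contains_iff_isContained {V W : Type*} {G : SimpleGraph V} {H : SimpleGraph W} :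
    Contains G H ↔ H ⊑ G :=
  ⟨fun ⟨f, hf, hadj⟩ => ⟨⟨⟨f, hadj _ _⟩, hf⟩⟩,
    fun ⟨c⟩ => ⟨c, c.injective, fun _ _ => c.toHom.map_adj⟩⟩

theorem not_contains_starG_of_degree_lt {V : Type*} [Fintype V] {G : SimpleGraph V}
    [DecidableRel G.Adj] {n : ℕ} (h : ∀ v, G.degree v < n) : ¬ Contains G (starG n) := by
  intro hG
  obtain ⟨f⟩ : starGraph (0 : Fin (n + 1)) ⊑ G := contains_iff_isContained.1 hG
  have hdeg := f.degree_le 0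
  rw [degree_starGraph_center, Fintype.card_fin] at hdeg
  exact absurd (h (f 0)) (by omega)

theorem degree_lt_card_of_injOn {V β : Type*} [Fintype V] {G : SimpleGraph V} [DecidableRel G.Adj]
    {v : V} {t : Finset β} (f : V → β) (hf : Set.MapsTo f (insert v (G.neighborSet v)) t)
    (hinj : Set.InjOn f (insert v (G.neighborSet v))) : G.degree v < t.card := by
  classical
  have hcard := Finset.card_le_card_of_injOn f (s := insert v (G.neighborFinset v))
    (by simpa using hf) (by simpa using hinj)
  rwa [Finset.card_insert_of_notMem (G.notMem_neighborFinset_self v),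
    card_neighborFinset_eq_degree, Nat.succ_le_iff] at hcard

theorem Nat.eq_of_mod_eq_of_lt_two_mul {n x y : ℕ} (hx : x < 2 * n) (hy : y < 2 * n)
    (hxy : x < n ↔ y < n) (h : x % n = y % n) : x = y := by
  rcases lt_or_ge x n with hxn | hxn
  · rwa [Nat.mod_eq_of_lt hxn, Nat.mod_eq_of_lt (hxy.1 hxn)] at h
  · have hyn : n ≤ y := not_lt.1 (mt hxy.2 (not_lt.2 hxn))
    rw [Nat.mod_eq_sub_mod hxn, Nat.mod_eq_sub_mod hyn, Nat.mod_eq_of_lt (by omega),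
      Nat.mod_eq_of_lt (by omega)] at h
    omega

theorem twoCliques_le (n : ℕ) : twoCliques n ≤ KstarK1 (2 * n) n := by
  intro a b hab
  simp only [twoCliques, KstarK1, fromRel_adj] at hab ⊢
  exact ⟨hab.1, Or.inl (Or.inl (by omega))⟩

theorem twoCliques_degree_lt {n : ℕ} (hn : 0 < n) (v : Fin (2 * n + 1)) :
    (twoCliques n).degree v < n := by
  have hblock : ∀ w ∈ insert v ((twoCliques n).neighborSet v),
      w.val = v.val ∨ (w.val < 2 * n ∧ v.val < 2 * n ∧ (w.val < n ↔ v.val < n)) := by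
    intro w hw
    rcases hw with hw | hw
    · exact Or.inl (congrArg Fin.val hw)
    · simp only [twoCliques, mem_neighborSet, fromRel_adj] at hw
      exact Or.inr (by omega)
  -- A closed neighbourhood lies in one block, on which `w % n` is injective.
  have hinj : Set.InjOn (fun w => w.val % n) (insert v ((twoCliques n).neighborSet v)) := by
    intro x hx y hy hxy
    have hsame :
        x.val = y.val ∨ (x.val < 2 * n ∧ y.val < 2 * n ∧ (x.val < n ↔ y.val < n)) := by
      have := hblock x hx
      have := hblock y hy
      omega
    rcases hsame with h | ⟨hx, hy, hxy'⟩
    exacts [Fin.ext h, Fin.ext (Nat.eq_of_mod_eq_of_lt_two_mul hx hy hxy' hxy)]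
  simpa using degree_lt_card_of_injOn (t := Finset.range n) _
    (fun w _ => Finset.mem_coe.2 (Finset.mem_range.2 (Nat.mod_lt w.val hn))) hinj

theorem colorable_two_KstarK1_sdiff_twoCliques (n : ℕ) :
    (KstarK1 (2 * n) n \ twoCliques n).Colorable 2 :=
  (Coloring.mk (fun v => decide (v.val < n)) fun {a b} hab => by
    simp only [sdiff_adj, KstarK1, twoCliques, fromRel_adj] at hab
    simp only [ne_eq, decide_eq_decide]
    omega).colorable

theorem completeGraph_fin_three_isContained_starPlusE {m : ℕ} (hm : 2 ≤ m) :
    completeGraph (Fin 3) ⊑ starPlusE m :=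
  ⟨⟨⟨Fin.castLE (by omega), fun {a b} hab => by
    have h1 : 1 % (m + 1) = 1 := Nat.mod_eq_of_lt (by omega)
    have h2 : 2 % (m + 1) = 2 := Nat.mod_eq_of_lt (by omega)
    simp only [starPlusE, fromRel_adj, ne_eq, Fin.ext_iff, Fin.val_castLE]
    fin_cases a <;> fin_cases b <;> simp [h1, h2] at hab ⊢⟩,
    Fin.castLE_injective (by omega)⟩⟩

theorem stmt_15_general (n m : ℕ) (hn : 3 ≤ n) (hm : 3 ≤ m) :
    (SimpleGraph.fromRel (fun a b : Fin (2 * n + 1) =>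
        (a.val < n ∧ b.val < n) ∨
        (n ≤ a.val ∧ a.val < 2 * n ∧ n ≤ b.val ∧ b.val < 2 * n)))
      ≤ KstarK1 (2 * n) n ∧
    ¬ Contains (SimpleGraph.fromRel (fun a b : Fin (2 * n + 1) =>
        (a.val < n ∧ b.val < n) ∨
        (n ≤ a.val ∧ a.val < 2 * n ∧ n ≤ b.val ∧ b.val < 2 * n))) (starG n) ∧
    ¬ Contains (KstarK1 (2 * n) n \ SimpleGraph.fromRel (fun a b : Fin (2 * n + 1) =>
        (a.val < n ∧ b.val < n) ∨
        (n ≤ a.val ∧ a.val < 2 * n ∧ n ≤ b.val ∧ b.val < 2 * n))) (starPlusE m) := by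
  refine ⟨twoCliques_le n, not_contains_starG_of_degree_lt (twoCliques_degree_lt (by omega)),
    fun hblue => ?_⟩
  have hK3 := (completeGraph_fin_three_isContained_starPlusE (by omega)).trans
    (contains_iff_isContained.1 hblue)
  exact hK3.not_cliqueFree ((colorable_two_KstarK1_sdiff_twoCliques n).cliqueFree (by norm_num))

theorem stmt_15 (n m : ℕ) (hn : 3 ≤ n) (hm : 3 ≤ m) (hmn : m < n + 2) :
    (SimpleGraph.fromRel (fun a b : Fin (2 * n + 1) =>
        (a.val < n ∧ b.val < n) ∨
        (n ≤ a.val ∧ a.val < 2 * n ∧ n ≤ b.val ∧ b.val < 2 * n)))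
      ≤ KstarK1 (2 * n) n ∧
    ¬ Contains (SimpleGraph.fromRel (fun a b : Fin (2 * n + 1) =>
        (a.val < n ∧ b.val < n) ∨
        (n ≤ a.val ∧ a.val < 2 * n ∧ n ≤ b.val ∧ b.val < 2 * n))) (starG n) ∧
    ¬ Contains (KstarK1 (2 * n) n \ SimpleGraph.fromRel (fun a b : Fin (2 * n + 1) =>
        (a.val < n ∧ b.val < n) ∨
        (n ≤ a.val ∧ a.val < 2 * n ∧ n ≤ b.val ∧ b.val < 2 * n))) (starPlusE m) :=
  stmt_15_general n m hn hm
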